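/- arXiv:1908.00703 — 5 statements merged into one kernel-verified Lean document; each statement's English description precedes it below -/
import Mathlib

section
/- Suppose α11, α12, α21, α22 are nonnegative reals satisfying the strong interference condition max(α11, α22) ≤ min(α12, α21). Then the interference-channel sum-GDoF expression D_IC := min( max(α11 − α21, α12) + max(α22 − α12, α21), max(α11, α12) + max(α22 − α12, 0), max(α21, α22) + max(α11 − α21, 0), α11 + α22 ) simplifies to min(α12, α21, α11 + α22). -/
theorem D_IC_strong_interference (α11 α12 α21 α22 : ℝ)
    (h11 : 0 ≤ α11) (h12 : 0 ≤ α12) (h21 : 0 ≤ α21) (h22 : 0 ≤ α22)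
    (hstrong : max α11 α22 ≤ min α12 α21) :
    min (min (max (α11 - α21) α12 + max (α22 - α12) α21)
             (max α11 α12 + max (α22 - α12) 0))
        (min (max α21 α22 + max (α11 - α21) 0)
             (α11 + α22))
      = min (min α12 α21) (α11 + α22) := by
  simp only [max_le_iff, le_min_iff] at hstrong
  obtain ⟨⟨h1, h2⟩, h3, h4⟩ := hstrong
  rw [max_eq_right (by linarith : α11 - α21 ≤ α12),
      max_eq_right (by linarith : α22 - α12 ≤ α21),
      max_eq_right h1, max_eq_right (by linarith : α22 - α12 ≤ (0:ℝ)),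
      max_eq_left h4, max_eq_right (by linarith : α11 - α21 ≤ (0:ℝ))]
  rw [add_zero, add_zero, min_eq_right (by linarith : α12 ≤ α12 + α21), min_assoc]
end

section
/- Suppose α11, α12, α21, α22 are nonnegative reals satisfying the weak interference condition max(α12, α21) ≤ min(α11, α22). Then D_BC := min( max(α11, α12) + max(max(α21 − α11, α22 − α12), 0), max(α21, α22) + max(max(α11 − α21, α12 − α22), 0) ) equals α11 + α22 − max(α12, α21). -/
theorem D_BC_weak_interference (α11 α12 α21 α22 : ℝ)
    (h11 : 0 ≤ α11) (h12 : 0 ≤ α12) (h21 : 0 ≤ α21) (h22 : 0 ≤ α22)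
    (hweak : max α12 α21 ≤ min α11 α22) :
    min (max α11 α12 + max (max (α21 - α11) (α22 - α12)) 0)
        (max α21 α22 + max (max (α11 - α21) (α12 - α22)) 0)
      = α11 + α22 - max α12 α21 := by
  simp only [max_le_iff, le_min_iff] at hweak
  obtain ⟨⟨h1, h2⟩, h3, h4⟩ := hweak
  rw [max_eq_left h1, max_eq_right h4,
      max_eq_right (by linarith : α21 - α11 ≤ α22 - α12),
      max_eq_left (by linarith : (0:ℝ) ≤ α22 - α12),
      max_eq_left (by linarith : α12 - α22 ≤ α11 - α21),
      max_eq_left (by linarith : (0:ℝ) ≤ α11 - α21)]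
  rcases le_total α12 α21 with h | h
  · rw [max_eq_right h, min_eq_right (by linarith)]; ring
  · rw [max_eq_left h, min_eq_left (by linarith)]; ring
end

section
/- Suppose α11, α12, α21, α22 are nonnegative reals satisfying the weak interference condition max(α12, α21) ≤ min(α11, α22), and additionally α11 ≥ α12 + α21 and α22 ≥ α12 + α21. Then D_BC − D_IC = min(α12, α21), where D_IC := min( max(α11 − α21, α12) + max(α22 − α12, α21), max(α11, α12) + max(α22 − α12, 0), max(α21, α22) + max(α11 − α21, 0), α11 + α22 ) and D_BC := min( max(α11, α12) + max(max(α21 − α11, α22 − α12), 0), max(α21, α22) + max(max(α11 − α21, α12 − α22), 0) ). -/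
theorem coop_gain_weak_subcase (α11 α12 α21 α22 : ℝ)
    (h11 : 0 ≤ α11) (h12 : 0 ≤ α12) (h21 : 0 ≤ α21) (h22 : 0 ≤ α22)
    (hweak : max α12 α21 ≤ min α11 α22)
    (h1 : α12 + α21 ≤ α11) (h2 : α12 + α21 ≤ α22) :
    (min (max α11 α12 + max (max (α21 - α11) (α22 - α12)) 0)
         (max α21 α22 + max (max (α11 - α21) (α12 - α22)) 0))
    - (min (min (max (α11 - α21) α12 + max (α22 - α12) α21)
                (max α11 α12 + max (α22 - α12) 0))
           (min (max α21 α22 + max (α11 - α21) 0)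
                (α11 + α22)))
      = min α12 α21 := by
  simp only [max_le_iff, le_min_iff] at hweak
  obtain ⟨⟨a, b⟩, c, d⟩ := hweak
  rw [max_eq_left (by linarith : α12 ≤ α11),
      max_eq_right (by linarith : α21 ≤ α22),
      max_eq_left (show max (α21 - α11) (α22 - α12) ≥ 0 from
        le_max_of_le_right (by linarith)),
      max_eq_right (by linarith : α21 - α11 ≤ α22 - α12),
      max_eq_left (show max (α11 - α21) (α12 - α22) ≥ 0 from
        le_max_of_le_left (by linarith)),
      max_eq_left (by linarith : α12 - α22 ≤ α11 - α21),
      max_eq_left (by linarith : α12 ≤ α11 - α21),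
      max_eq_left (by linarith : α21 ≤ α22 - α12),
      max_eq_left (by linarith : (0:ℝ) ≤ α22 - α12),
      max_eq_left (by linarith : (0:ℝ) ≤ α11 - α21),
      min_eq_left (by linarith : α11 - α21 + (α22 - α12) ≤ α11 + (α22 - α12)),
      min_eq_left (by linarith : α22 + (α11 - α21) ≤ α11 + α22),
      min_eq_left (by linarith : α11 - α21 + (α22 - α12) ≤ α22 + (α11 - α21))]
  rcases le_total α12 α21 with h | h
  · rw [min_eq_right (by linarith), min_eq_left h]; ring
  · rw [min_eq_left (by linarith), min_eq_right h]; ring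
end

section
/- Suppose α11, α12, α21, α22 are nonnegative reals with max(α11, α22) ≤ min(α12, α21), α12 ≤ α11 + α22, α21 ≤ α11 + α22, α12 + α21 ≥ α11 + α22 + max(α11, α22), α12 ≥ α21, and 2α11 + 2α22 − α12 − α21 ≤ π ≤ 2α12 + 2α21 − α11 − α22 − 3max(α11, α22). Define d11 = (2α21 − α12 + 2α11 − α22 − π)/3, d22 = (2α12 − α21 + 2α22 − α11 − π)/3, d01p = (α11 + α22 + α12 − 2α21 + π)/3, d02p = (α11 + α22 + α21 − 2α12 + π)/3, d0c = (α12 + α21 − 2α11 − 2α22 + π)/3. Then all five quantities are nonnegative, d01p + d02p + d0c ≤ π, and d11 + d22 + d01p + d02p + d0c = (α11 + α12 + α21 + α22 + π)/3. -/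
theorem case2_allocation (α11 α12 α21 α22 π : ℝ)
    (h11 : 0 ≤ α11) (h12 : 0 ≤ α12) (h21 : 0 ≤ α21) (h22 : 0 ≤ α22) (hπ : 0 ≤ π)
    (hstrong : max α11 α22 ≤ min α12 α21)
    (hA : α12 ≤ α11 + α22) (hB : α21 ≤ α11 + α22)
    (hC : α11 + α22 + max α11 α22 ≤ α12 + α21)
    (hD : α21 ≤ α12)
    (hπlo : 2 * α11 + 2 * α22 - α12 - α21 ≤ π)
    (hπhi : π ≤ 2 * α12 + 2 * α21 - α11 - α22 - 3 * max α11 α22) :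
    let d11 := (2 * α21 - α12 + 2 * α11 - α22 - π) / 3
    let d22 := (2 * α12 - α21 + 2 * α22 - α11 - π) / 3
    let d01p := (α11 + α22 + α12 - 2 * α21 + π) / 3
    let d02p := (α11 + α22 + α21 - 2 * α12 + π) / 3
    let d0c := (α12 + α21 - 2 * α11 - 2 * α22 + π) / 3
    0 ≤ d11 ∧ 0 ≤ d22 ∧ 0 ≤ d01p ∧ 0 ≤ d02p ∧ 0 ≤ d0c ∧
    d01p + d02p + d0c ≤ π ∧
    d11 + d22 + d01p + d02p + d0c = (α11 + α12 + α21 + α22 + π) / 3 := by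
  rcases le_total α11 α22 with h | h <;>
    simp only [max_eq_right, max_eq_left, le_min_iff, h] at hstrong hC hπhi <;>
    refine ⟨by linarith, by linarith, by linarith, by linarith, by linarith, by linarith, by ring⟩
end

section
/- Suppose α11, α12, α21, α22 are nonnegative reals in the mixed interference regime (min(α12, α21) ≤ max(α11, α22) and max(α12, α21) ≥ min(α11, α22)) and suppose α11 + α22 ≥ α12 + α21. Then D_BC = D_IC, where D_IC := min( max(α11 − α21, α12) + max(α22 − α12, α21), max(α11, α12) + max(α22 − α12, 0), max(α21, α22) + max(α11 − α21, 0), α11 + α22 ) and D_BC := min( max(α11, α12) + max(max(α21 − α11, α22 − α12), 0), max(α21, α22) + max(max(α11 − α21, α12 − α22), 0) ). -/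
set_option maxHeartbeats 2000000 in
theorem mixed_no_coop_gain (α11 α12 α21 α22 : ℝ)
    (h11 : 0 ≤ α11) (h12 : 0 ≤ α12) (h21 : 0 ≤ α21) (h22 : 0 ≤ α22)
    (hm1 : min α12 α21 ≤ max α11 α22) (hm2 : min α11 α22 ≤ max α12 α21)
    (hsum : α12 + α21 ≤ α11 + α22) :
    min (max α11 α12 + max (max (α21 - α11) (α22 - α12)) 0)
        (max α21 α22 + max (max (α11 - α21) (α12 - α22)) 0)
      = min (min (max (α11 - α21) α12 + max (α22 - α12) α21)
                 (max α11 α12 + max (α22 - α12) 0))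
            (min (max α21 α22 + max (α11 - α21) 0)
                 (α11 + α22)) := by
  rw [max_eq_right (by linarith : α21 - α11 ≤ α22 - α12),
      max_eq_left (by linarith : α12 - α22 ≤ α11 - α21)]
  simp only [min_le_iff, le_max_iff] at hm1 hm2
  have h1 : min (max α11 α12 + max (α22 - α12) 0)
      (max α21 α22 + max (α11 - α21) 0)
      ≤ max (α11 - α21) α12 + max (α22 - α12) α21 := by
    simp only [min_def, max_def]
    split_ifs <;>
      first
        | linarith
        | (rcases hm1 with (h|h)|(h|h) <;> rcases hm2 with (h'|h')|(h'|h') <;>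
            linarith)
  have h4 : min (max α11 α12 + max (α22 - α12) 0)
      (max α21 α22 + max (α11 - α21) 0) ≤ α11 + α22 := by
    simp only [min_def, max_def]
    split_ifs <;>
      first
        | linarith
        | (rcases hm1 with (h|h)|(h|h) <;> rcases hm2 with (h'|h')|(h'|h') <;>
            linarith)
  exact le_antisymm
    (le_min (le_min h1 (min_le_left _ _)) (le_min (min_le_right _ _) h4))
    (le_min (le_trans (min_le_left _ _) (min_le_right _ _))
      (le_trans (min_le_right _ _) (min_le_left _ _)))
end
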